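/- The Goldstein–Price function satisfies f(x,y) ≥ 3 for all real x, y. -/

import Mathlib

/-! In the variables `s = x + y + 1` and `t = 2x - 3y` the two factors of the Goldstein–Price
function become `1 + s²(3s² - 20s + 36)` and `30 + t²(3t² - 16t + 18)`. The quadratic
`3s² - 20s + 36` has negative discriminant, so the first factor is at least `1`; the second
one equals `3 + (t - 3)²(3t² + 2t + 3)`, again with a positive quadratic, so it is at least `3`. -/

section

variable {R : Type*} [CommRing R] [LinearOrder R] [IsStrictOrderedRing R]

lemma one_le_goldsteinPrice_left_factor (s : R) : 1 ≤ 1 + s ^ 2 * (3 * s ^ 2 - 20 * s + 36) := by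
  have hq : 0 < 3 * s ^ 2 - 20 * s + 36 := by nlinarith [sq_nonneg (3 * s - 10)]
  exact le_add_of_nonneg_right (mul_nonneg (sq_nonneg s) hq.le)

lemma three_le_goldsteinPrice_right_factor (t : R) :
    3 ≤ 30 + t ^ 2 * (3 * t ^ 2 - 16 * t + 18) := by
  have hq : 0 < 3 * t ^ 2 + 2 * t + 3 := by nlinarith [sq_nonneg (3 * t + 1)]
  have hsos : 30 + t ^ 2 * (3 * t ^ 2 - 16 * t + 18) =
      3 + (t - 3) ^ 2 * (3 * t ^ 2 + 2 * t + 3) := by ring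
  rw [hsos]
  exact le_add_of_nonneg_right (mul_nonneg (sq_nonneg _) hq.le)

end

theorem goldstein_price_lower_bound
    (f : ℝ × ℝ → ℝ)
    (hf : ∀ p : ℝ × ℝ, f p =
      (1 + (p.1 + p.2 + 1) ^ 2 *
        (19 - 14 * p.1 + 3 * p.1 ^ 2 - 14 * p.2 + 6 * p.1 * p.2 + 3 * p.2 ^ 2)) *
      (30 + (2 * p.1 - 3 * p.2) ^ 2 *
        (18 - 32 * p.1 + 12 * p.1 ^ 2 + 48 * p.2 - 36 * p.1 * p.2 + 27 * p.2 ^ 2))) :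
    ∀ p : ℝ × ℝ, 3 ≤ f p := by
  rintro ⟨x, y⟩
  have hleft : 19 - 14 * x + 3 * x ^ 2 - 14 * y + 6 * x * y + 3 * y ^ 2 =
      3 * (x + y + 1) ^ 2 - 20 * (x + y + 1) + 36 := by ring
  have hright : 18 - 32 * x + 12 * x ^ 2 + 48 * y - 36 * x * y + 27 * y ^ 2 =
      3 * (2 * x - 3 * y) ^ 2 - 16 * (2 * x - 3 * y) + 18 := by ring
  rw [hf, hleft, hright]
  have hB := three_le_goldsteinPrice_right_factor (2 * x - 3 * y)
  exact hB.trans (le_mul_of_one_le_left (by linarith) (one_le_goldsteinPrice_left_factor _))
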